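/- arXiv:2507.03470 — 4 statements merged into one kernel-verified Lean document; each statement's English description precedes it below -/
import Mathlib

section
/- Let γ₂ < 0 < 1 < γ₁ and 0 < L. Then the equation λ^{γ₁−γ₂} = [(γ₁−1)(γ₂(1−Lλ)+Lλ)] / [(γ₂−1)(γ₁(1−Lλ)+Lλ)] has a unique solution λ in the open interval (0,1), provided L ≥ 1. -/
/-!
Write `p = γ₁ - γ₂ > 0` and `a l = (γ₁ - 1) (γ₂ (1 - L l) + L l)` for the numerator. The denominator
is exactly `a l - p`, so the right-hand side is `φ (a l)` with `φ x = x / (x - p)`, which decreases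
on `x < p`. Since `a` is increasing affine with root `m = γ₂ / ((γ₂ - 1) L) ≤ 1`, the function
`l ^ p - φ (a l)` is strictly increasing on `[0, m]`, negative at `0` and positive at `m`. Conversely
a solution in `(0, 1)` has `φ (a l) ∈ (0, 1)`, which forces `a l < 0`, i.e. `l < m`.
-/

open Set

lemma neg_of_lt_of_div_mem_Ioo {a b : ℝ} (hba : b < a) (h : a / b ∈ Ioo 0 1) : a < 0 := by
  obtain ⟨hpos, hlt⟩ := h
  rcases div_pos_iff.mp hpos with ⟨ha, hb⟩ | ⟨ha, _⟩
  · rw [div_lt_one hb] at hlt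
    linarith
  · exact ha

lemma strictAntiOn_div_sub_const {p : ℝ} (hp : 0 < p) :
    StrictAntiOn (fun x : ℝ => x / (x - p)) (Iio p) := by
  intro x hx y hy hxy
  have hxp : x - p < 0 := sub_neg.mpr hx
  have hyp : y - p < 0 := sub_neg.mpr hy
  have hdiff : x / (x - p) - y / (y - p) = p * (y - x) / ((x - p) * (y - p)) := by
    rw [div_sub_div _ _ hxp.ne hyp.ne]
    ring
  have : 0 < p * (y - x) / ((x - p) * (y - p)) :=
    div_pos (mul_pos hp (sub_pos.mpr hxy)) (mul_pos_of_neg_of_neg hxp hyp)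
  simp only
  linarith

section

variable {p m : ℝ} {a : ℝ → ℝ}

lemma strictMonoOn_rpow_sub_div_sub (hp : 0 < p) (ha : StrictMono a) (ham : a m = 0) :
    StrictMonoOn (fun l => l ^ p - a l / (a l - p)) (Icc 0 m) := by
  intro x hx y hy hxy
  have hpow : x ^ p < y ^ p := Real.rpow_lt_rpow hx.1 hxy hp
  have hay : a y < p := (ha.monotone hy.2).trans_lt (ham ▸ hp)
  have hfrac : a y / (a y - p) < a x / (a x - p) :=
    strictAntiOn_div_sub_const hp ((ha hxy).trans hay) hay (ha hxy)
  simp only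
  linarith

lemma continuousOn_rpow_sub_div_sub (hp : 0 < p) (ha : StrictMono a) (hac : Continuous a)
    (ham : a m = 0) : ContinuousOn (fun l => l ^ p - a l / (a l - p)) (Icc 0 m) := by
  refine (continuousOn_id.rpow_const fun _ _ => Or.inr hp.le).sub ?_
  refine hac.continuousOn.div (hac.sub continuous_const).continuousOn fun l hl => ?_
  have : a l ≤ 0 := ham ▸ ha.monotone hl.2
  linarith

lemma lt_of_rpow_eq_div_sub (hp : 0 < p) (ha : StrictMono a) (ham : a m = 0) {y : ℝ}
    (hy : y ∈ Ioo 0 1) (heq : y ^ p = a y / (a y - p)) : y < m := by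
  have hmem : a y / (a y - p) ∈ Ioo 0 1 :=
    heq ▸ ⟨Real.rpow_pos_of_pos hy.1 p, Real.rpow_lt_one hy.1.le hy.2 hp⟩
  have hneg : a y < 0 := neg_of_lt_of_div_mem_Ioo (by linarith) hmem
  exact ha.lt_iff_lt.mp (ham ▸ hneg)

theorem existsUnique_rpow_eq_div_sub (hp : 0 < p) (hm₀ : 0 < m) (hm₁ : m ≤ 1)
    (ha : StrictMono a) (hac : Continuous a) (ham : a m = 0) :
    ∃! l, l ∈ Ioo 0 1 ∧ l ^ p = a l / (a l - p) := by
  set h : ℝ → ℝ := fun l => l ^ p - a l / (a l - p)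
  have hmono := strictMonoOn_rpow_sub_div_sub hp ha ham
  have h_zero : h 0 < 0 := by
    have ha0 : a 0 < 0 := (ha hm₀).trans_eq ham
    have : 0 < a 0 / (a 0 - p) := div_pos_of_neg_of_neg ha0 (by linarith)
    simp only [h, Real.zero_rpow hp.ne']
    linarith
  have h_m : 0 < h m := by
    simpa [h, ham] using Real.rpow_pos_of_pos hm₀ p
  obtain ⟨l₀, hl₀, hroot⟩ :=
    intermediate_value_Ioo hm₀.le (continuousOn_rpow_sub_div_sub hp ha hac ham) ⟨h_zero, h_m⟩
  refine ⟨l₀, ⟨⟨hl₀.1, hl₀.2.trans_le hm₁⟩, sub_eq_zero.mp hroot⟩, fun y ⟨hy, heq⟩ => ?_⟩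
  have hym : y < m := lt_of_rpow_eq_div_sub hp ha ham hy heq
  exact hmono.injOn ⟨hy.1.le, hym.le⟩ ⟨hl₀.1.le, hl₀.2.le⟩
    ((sub_eq_zero.mpr heq).trans hroot.symm)

end

/-- unique solution `λ ∈ (0,1)` of the boundary equation for the
floating-strike lookback put. -/
theorem lookback_put_boundary_unique (γ₁ γ₂ L : ℝ)
    (hγ₂ : γ₂ < 0) (hγ₁ : 1 < γ₁) (hL : 1 ≤ L) :
    ∃! l : ℝ, l ∈ Set.Ioo (0 : ℝ) 1 ∧
      l ^ (γ₁ - γ₂) =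
        ((γ₁ - 1) * (γ₂ * (1 - L * l) + L * l)) /
          ((γ₂ - 1) * (γ₁ * (1 - L * l) + L * l)) := by
  have hden : (γ₂ - 1) * L < 0 := mul_neg_of_neg_of_pos (by linarith) (by linarith)
  set m := γ₂ / ((γ₂ - 1) * L) with hm
  have hm₁ : m ≤ 1 := by
    rw [hm, div_le_one_of_neg hden]
    nlinarith
  have hslope : 0 < (γ₁ - 1) * (1 - γ₂) * L :=
    mul_pos (mul_pos (by linarith) (by linarith)) (by linarith)
  have key := existsUnique_rpow_eq_div_sub (p := γ₁ - γ₂) (m := m)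
    (a := fun l => (γ₁ - 1) * (1 - γ₂) * L * (l - m))
    (by linarith) (div_pos_of_neg_of_neg hγ₂ hden) hm₁
    (fun x y hxy => mul_lt_mul_of_pos_left (sub_lt_sub_right hxy m) hslope) (by fun_prop)
    (by simp only [sub_self, mul_zero])
  have hγ₂1 : γ₂ - 1 ≠ 0 := by linarith
  have hL0 : L ≠ 0 := by linarith
  convert key using 5 with l
  all_goals
    rw [hm]
    field_simp
    ring
end

section
/- Let γ₂ < 0 < 1 < γ₁ and K ≥ 1. Then the equation ν^{γ₁−γ₂} = [(γ₁−1)(γ₂(1−Kν)+Kν)] / [(γ₂−1)(γ₁(1−Kν)+Kν)] has a unique solution ν in the open interval (1, ∞). -/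
private noncomputable def Dfun (γ₁ γ₂ K v : ℝ) : ℝ :=
  (γ₂ - 1) * (γ₁ * (1 - K * v) + K * v)

private noncomputable def Phi (γ₁ γ₂ K v : ℝ) : ℝ :=
  (v ^ (γ₁ - γ₂) - 1) * Dfun γ₁ γ₂ K v

private lemma Dfun_eq (γ₁ γ₂ K v : ℝ) :
    Dfun γ₁ γ₂ K v = (γ₂ - 1) * γ₁ + (K * (1 - γ₂) * (γ₁ - 1)) * v := by
  unfold Dfun; ring

private lemma Dfun_mono (γ₁ γ₂ K : ℝ) (hγ₂ : γ₂ < 0) (hγ₁ : 1 < γ₁) (hK : 1 ≤ K)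
    {x y : ℝ} (hxy : x < y) : Dfun γ₁ γ₂ K x < Dfun γ₁ γ₂ K y := by
  rw [Dfun_eq, Dfun_eq]
  have hd : 0 < K * (1 - γ₂) * (γ₁ - 1) :=
    mul_pos (mul_pos (by linarith) (by linarith)) (by linarith)
  nlinarith [mul_pos hd (sub_pos.2 hxy)]

private lemma one_lt_rpow_aux {x e : ℝ} (hx : 1 < x) (he : 0 < e) : 1 < x ^ e := by
  have h : (1:ℝ) ^ e < x ^ e := Real.rpow_lt_rpow zero_le_one hx he
  rwa [Real.one_rpow] at h

private lemma phi_lt (γ₁ γ₂ K : ℝ) (hγ₂ : γ₂ < 0) (hγ₁ : 1 < γ₁) (hK : 1 ≤ K)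
    {x y : ℝ} (hx : 1 < x) (hxy : x < y) (hDx : 0 < Dfun γ₁ γ₂ K x) :
    Phi γ₁ γ₂ K x < Phi γ₁ γ₂ K y := by
  have hab : 0 < γ₁ - γ₂ := by linarith
  have hfx : 1 < x ^ (γ₁ - γ₂) := one_lt_rpow_aux hx hab
  have hfxy : x ^ (γ₁ - γ₂) < y ^ (γ₁ - γ₂) :=
    Real.rpow_lt_rpow (by linarith) hxy hab
  have hD : Dfun γ₁ γ₂ K x < Dfun γ₁ γ₂ K y := Dfun_mono γ₁ γ₂ K hγ₂ hγ₁ hK hxy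
  unfold Phi
  exact mul_lt_mul'' (by linarith) hD (by linarith) (le_of_lt hDx)

private lemma phi_inj (γ₁ γ₂ K : ℝ) (hγ₂ : γ₂ < 0) (hγ₁ : 1 < γ₁) (hK : 1 ≤ K)
    {x y : ℝ} (hx : 1 < x) (hy : 1 < y)
    (hfx : Phi γ₁ γ₂ K x = γ₁ - γ₂) (hfy : Phi γ₁ γ₂ K y = γ₁ - γ₂) : x = y := by
  have hab : 0 < γ₁ - γ₂ := by linarith
  have hDpos : ∀ z : ℝ, 1 < z → Phi γ₁ γ₂ K z = γ₁ - γ₂ → 0 < Dfun γ₁ γ₂ K z := by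
    intro z hz hfz
    have h1 : 1 < z ^ (γ₁ - γ₂) := one_lt_rpow_aux hz hab
    by_contra h
    push_neg at h
    have : (z ^ (γ₁ - γ₂) - 1) * Dfun γ₁ γ₂ K z ≤ 0 :=
      mul_nonpos_of_nonneg_of_nonpos (by linarith) h
    unfold Phi at hfz
    linarith
  rcases lt_trichotomy x y with h | h | h
  · have := phi_lt γ₁ γ₂ K hγ₂ hγ₁ hK hx h (hDpos x hx hfx)
    rw [hfx, hfy] at this; linarith
  · exact h
  · have := phi_lt γ₁ γ₂ K hγ₂ hγ₁ hK hy h (hDpos y hy hfy)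
    rw [hfx, hfy] at this; linarith

/-- unique solution `ν ∈ (1,∞)` of the boundary equation for the
floating-strike lookback call. -/
theorem lookback_call_boundary_unique (γ₁ γ₂ K : ℝ)
    (hγ₂ : γ₂ < 0) (hγ₁ : 1 < γ₁) (hK : 1 ≤ K) :
    ∃! v : ℝ, v ∈ Set.Ioi (1 : ℝ) ∧
      v ^ (γ₁ - γ₂) =
        ((γ₁ - 1) * (γ₂ * (1 - K * v) + K * v)) /
          ((γ₂ - 1) * (γ₁ * (1 - K * v) + K * v)) := by
  have hab : 0 < γ₁ - γ₂ := by linarith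
  -- Key equivalence: for v > 1 the equation is equivalent to `Phi v = γ₁ - γ₂`.
  have key : ∀ v : ℝ, 1 < v →
      ((v ^ (γ₁ - γ₂) =
        ((γ₁ - 1) * (γ₂ * (1 - K * v) + K * v)) /
          ((γ₂ - 1) * (γ₁ * (1 - K * v) + K * v))) ↔
        Phi γ₁ γ₂ K v = γ₁ - γ₂) := by
    intro v hv
    have hvpos : (0:ℝ) < v := by linarith
    have hp : 0 < v ^ (γ₁ - γ₂) := Real.rpow_pos_of_pos hvpos _
    unfold Phi Dfun
    by_cases hD : (γ₂ - 1) * (γ₁ * (1 - K * v) + K * v) = 0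
    · rw [hD, div_zero, mul_zero]
      exact iff_of_false (ne_of_gt hp) (by linarith)
    · rw [eq_div_iff hD]
      constructor <;> intro h <;> linear_combination h
  -- choose a large point v₀ where Phi exceeds γ₁ - γ₂
  have hd : 0 < K * (1 - γ₂) * (γ₁ - 1) :=
    mul_pos (mul_pos (by linarith) (by linarith)) (by linarith)
  set q : ℝ := (γ₁ - γ₂ + 1 - (γ₂ - 1) * γ₁) / (K * (1 - γ₂) * (γ₁ - 1)) with hq
  set v₀ : ℝ := max 2 q with hv₀def
  have hv₀2 : (2:ℝ) ≤ v₀ := le_max_left _ _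
  have hv₀1 : (1:ℝ) ≤ v₀ := by linarith
  have hDv₀ : γ₁ - γ₂ + 1 ≤ Dfun γ₁ γ₂ K v₀ := by
    have hqle : q ≤ v₀ := le_max_right _ _
    have : γ₁ - γ₂ + 1 - (γ₂ - 1) * γ₁ ≤ (K * (1 - γ₂) * (γ₁ - 1)) * v₀ := by
      rw [hq] at hqle
      have := (div_le_iff₀ hd).mp hqle
      linarith [this]
    rw [Dfun_eq]; linarith
  have hfv₀ : (2:ℝ) ≤ v₀ ^ (γ₁ - γ₂) := by
    have h1 : (2:ℝ) ^ (1:ℝ) ≤ (2:ℝ) ^ (γ₁ - γ₂) :=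
      Real.rpow_le_rpow_of_exponent_le (by norm_num) (by linarith)
    have h2 : (2:ℝ) ^ (γ₁ - γ₂) ≤ v₀ ^ (γ₁ - γ₂) :=
      Real.rpow_le_rpow (by norm_num) hv₀2 (le_of_lt hab)
    rw [Real.rpow_one] at h1
    linarith
  have hΦv₀ : γ₁ - γ₂ ≤ Phi γ₁ γ₂ K v₀ := by
    unfold Phi
    nlinarith [hfv₀, hDv₀, hab]
  -- continuity of Phi on [1, v₀]
  have hcont : ContinuousOn (Phi γ₁ γ₂ K) (Set.Icc 1 v₀) := by
    apply ContinuousOn.mul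
    · apply ContinuousOn.sub _ continuousOn_const
      intro x hx
      have hx0 : x ≠ 0 := by
        have := hx.1; intro h; rw [h] at this; linarith
      exact (Real.continuousAt_rpow_const x _ (Or.inl hx0)).continuousWithinAt
    · unfold Dfun
      fun_prop
  -- Phi 1 = 0
  have hΦ1 : Phi γ₁ γ₂ K 1 = 0 := by
    unfold Phi; rw [Real.one_rpow]; ring
  -- IVT
  have hmem : (γ₁ - γ₂) ∈ Set.Icc (Phi γ₁ γ₂ K 1) (Phi γ₁ γ₂ K v₀) := by
    rw [hΦ1]; exact ⟨le_of_lt hab, hΦv₀⟩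
  obtain ⟨v, hvmem, hveq⟩ := intermediate_value_Icc hv₀1 hcont hmem
  have hv1 : 1 < v := by
    rcases lt_or_eq_of_le hvmem.1 with h | h
    · exact h
    · exfalso; rw [← h, hΦ1] at hveq; linarith
  refine ⟨v, ⟨hv1, (key v hv1).mpr hveq⟩, ?_⟩
  rintro w ⟨hw1, hweq⟩
  have hw1' : 1 < w := hw1
  exact phi_inj γ₁ γ₂ K hγ₂ hγ₁ hK hw1' hv1 ((key w hw1').mp hweq) hveq
end

section
/- Let β₂ < 0 < 1 < β₁ and L > 0, and define V(x) = (L−a*)(x/a*)^{β₂} for x ≥ a* where a* = β₂L/(β₂−1). Then V is strictly decreasing and strictly convex on [a*, ∞), V(x) → 0 as x → ∞, and V(x) > (L − x) for all x > a*. -/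
/-!
The candidate value is a positive multiple of `x ↦ (x / a*) ^ β₂` with `β₂ < 0`, which is
decreasing, strictly convex and vanishing at infinity. The free boundary `a*` is chosen so that
`(L - a*) β₂ = -a*`, i.e. `V'(a*) = -1` (smooth fit); together with `V(a*) = L - a*` this makes
the payoff `L - x` the tangent line of `V` at `a*`, and a strictly convex function lies strictly
above its tangent lines.
-/

open Real Set Filter Topology

theorem StrictConvexOn.add_mul_sub_lt_of_hasDerivAt {S : Set ℝ} {f : ℝ → ℝ} {x y f' : ℝ}
    (hf : StrictConvexOn ℝ S f) (hx : x ∈ S) (hy : y ∈ S) (hxy : x < y)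
    (hf' : HasDerivAt f f' x) : f x + f' * (y - x) < f y := by
  have hslope := hf.lt_slope_of_hasDerivAt hx hy hxy hf'
  rw [slope_def_field, lt_div_iff₀ (sub_pos.mpr hxy)] at hslope
  linarith

section ScaledRpow

variable {a c p : ℝ}

theorem hasDerivAt_mul_div_rpow (ha : 0 < a) {x : ℝ} (hx : 0 < x) :
    HasDerivAt (fun y => c * (y / a) ^ p) (c * p / a * (x / a) ^ (p - 1)) x := by
  have hdiv : HasDerivAt (fun y : ℝ => y / a) (1 / a) x := by
    simpa using (hasDerivAt_id x).div_const a
  have hpow := (Real.hasDerivAt_rpow_const (p := p) (Or.inl (div_pos hx ha).ne')).comp x hdiv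
  exact (hpow.const_mul c).congr_deriv (by ring)

theorem strictAntiOn_mul_div_rpow (hc : 0 < c) (ha : 0 < a) (hp : p < 0) :
    StrictAntiOn (fun x => c * (x / a) ^ p) (Ioi 0) := fun x hx y _ hxy =>
  mul_lt_mul_of_pos_left (rpow_lt_rpow_of_neg (div_pos hx ha) (by gcongr) hp) hc

theorem strictConvexOn_mul_div_rpow (hc : 0 < c) (ha : 0 < a) (hp : p < 0) :
    StrictConvexOn ℝ (Ioi 0) (fun x => c * (x / a) ^ p) := by
  have hderiv x (hx : x ∈ Ioi (0 : ℝ)) := hasDerivAt_mul_div_rpow (c := c) (p := p) ha hx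
  refine StrictMonoOn.strictConvexOn_of_deriv (convex_Ioi 0)
    (fun x hx => (hderiv x hx).continuousAt.continuousWithinAt) ?_
  rw [interior_Ioi]
  intro x hx y hy hxy
  rw [(hderiv x hx).deriv, (hderiv y hy).deriv]
  have hcoef : c * p / a < 0 := div_neg_of_neg_of_pos (mul_neg_of_pos_of_neg hc hp) ha
  exact mul_lt_mul_of_neg_left
    (rpow_lt_rpow_of_neg (div_pos hx ha) (by gcongr) (by linarith)) hcoef

theorem tendsto_mul_div_rpow_atTop (ha : 0 < a) (hp : p < 0) :
    Tendsto (fun x => c * (x / a) ^ p) atTop (𝓝 0) := by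
  have hpow : Tendsto (fun t : ℝ => t ^ p) atTop (𝓝 0) := by
    simpa using tendsto_rpow_neg_atTop (y := -p) (by linarith)
  simpa using ((hpow.comp (tendsto_id.atTop_div_const ha)).const_mul c)

end ScaledRpow

theorem put_value_properties_general (β₂ L a : ℝ) (V : ℝ → ℝ)
    (hβ₂ : β₂ < 0) (hL : 0 < L)
    (ha : a = β₂ * L / (β₂ - 1))
    (hV : ∀ x : ℝ, V x = (L - a) * (x / a) ^ β₂) :
    StrictAntiOn V (Set.Ici a) ∧
      StrictConvexOn ℝ (Set.Ici a) V ∧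
      Filter.Tendsto V Filter.atTop (nhds 0) ∧
      ∀ x : ℝ, a < x → L - x < V x := by
  have hβ₂' : β₂ - 1 < 0 := by linarith
  have ha₀ : 0 < a := ha ▸ div_pos_of_neg_of_neg (mul_neg_of_neg_of_pos hβ₂ hL) hβ₂'
  have haL : a < L := by rw [ha, div_lt_iff_of_neg hβ₂']; nlinarith
  have smooth_fit : (L - a) * β₂ / a = -1 := by
    have : (L - a) * β₂ = -a := by
      rw [ha]; field_simp [hβ₂'.ne]; ring
    rw [this, neg_div, div_self ha₀.ne']
  obtain rfl : V = fun x => (L - a) * (x / a) ^ β₂ := funext hV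
  have hsub : Ici a ⊆ Ioi 0 := Ici_subset_Ioi.mpr ha₀
  have hconvex := strictConvexOn_mul_div_rpow (sub_pos.mpr haL) ha₀ hβ₂
  refine ⟨(strictAntiOn_mul_div_rpow (sub_pos.mpr haL) ha₀ hβ₂).mono hsub,
    hconvex.subset hsub (convex_Ici a), tendsto_mul_div_rpow_atTop ha₀ hβ₂, fun x hx => ?_⟩
  have htangent := hconvex.add_mul_sub_lt_of_hasDerivAt ha₀ (ha₀.trans hx) hx
    (hasDerivAt_mul_div_rpow ha₀ ha₀)
  simp only [div_self ha₀.ne', one_rpow, mul_one, smooth_fit] at htangent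
  linarith

/-- the candidate put value `V(x) = (L−a*)(x/a*)^{β₂}` is strictly decreasing
and strictly convex on `[a*,∞)`, tends to `0` at infinity, and strictly dominates the payoff
`L − x` on `(a*,∞)`. -/
theorem put_value_properties (β₁ β₂ L a : ℝ) (V : ℝ → ℝ)
    (hβ₂ : β₂ < 0) (hβ₁ : 1 < β₁) (hL : 0 < L)
    (ha : a = β₂ * L / (β₂ - 1))
    (hV : ∀ x : ℝ, V x = (L - a) * (x / a) ^ β₂) :
    StrictAntiOn V (Set.Ici a) ∧
      StrictConvexOn ℝ (Set.Ici a) V ∧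
      Filter.Tendsto V Filter.atTop (nhds 0) ∧
      ∀ x : ℝ, a < x → L - x < V x :=
  put_value_properties_general β₂ L a V hβ₂ hL ha hV
end

section
/- Let α ≠ 0 and define Z_t = (S_t/X_t)^α where X_t = x·exp((r−δ−σ²/2)t + σB_t) and S_t = max(s, max_{0≤u≤t} X_u), with x = s. If α < 0 then 0 < Z_t ≤ 1 for all t ≥ 0, Z_t = 1 exactly when X_t = S_t, and by Itô's formula dZ_t = −ασ(S_t/X_t)^α dB_t + α dS_t/S_t; in particular Z is a supermartingale (since α < 0 and S is nondecreasing, the drift term α dS_t/S_t is nonpositive). -/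
open MeasureTheory ProbabilityTheory

/-!
Since `X_t ≤ S_t`, `Z_t ∈ (0, 1]`, with `Z_t = 1` exactly when `X_t = S_t`. The supermartingale
property needs no Itô calculus: for `s ≤ t`, `S_s ≤ S_t` and `α < 0` give
`Z_t ≤ (S_s / X_t)^α = Z_s (X_s / X_t)^α`, and the value of `α` makes the drift of `log X` equal
to `α σ² / 2`, so that `(X_s / X_t)^α = exp (k (B_t - B_s) - k² (t - s) / 2)` with `k = -α σ`.
This increment of an exponential martingale is independent of `ℱ_s` with mean one, whence
`E[Z_t | ℱ_s] ≤ Z_s`.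
-/

/-- A standard one-dimensional Brownian motion started at `0`: continuous paths, Gaussian
increments with variance `t − s`, and independent increments. -/
def IsStandardBM {Ω : Type*} [MeasurableSpace Ω] (μ : Measure Ω) (B : ℝ → Ω → ℝ) : Prop :=
  (∀ ω, B 0 ω = 0) ∧
  (∀ ω, Continuous fun t => B t ω) ∧
  (∀ t : ℝ, Measurable (B t)) ∧
  (∀ s t : ℝ, 0 ≤ s → s ≤ t →
    Measure.map (fun ω => B t ω - B s ω) μ = gaussianReal 0 (Real.toNNReal (t - s))) ∧
  (∀ t : ℕ → ℝ, Monotone t → 0 ≤ t 0 →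
    iIndepFun (fun i ω => B (t (i + 1)) ω - B (t i) ω) μ)

open Set Real
open scoped NNReal

section RunningMaximum

variable {a b : ℝ} {f : ℝ → ℝ}

lemma ContinuousOn.sSup_image_Icc_mono {c : ℝ} (hf : ContinuousOn f (Icc a c)) (hab : a ≤ b)
    (hbc : b ≤ c) : sSup (f '' Icc a b) ≤ sSup (f '' Icc a c) :=
  csSup_le_csSup (isCompact_Icc.image_of_continuousOn hf).bddAbove
    ((nonempty_Icc.2 hab).image f) (image_mono (Icc_subset_Icc_right hbc))

lemma ContinuousOn.sSup_image_Icc_eq_iSup_rat (hab : a ≤ b) (hf : ContinuousOn f (Icc a b)) :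
    sSup (f '' Icc a b) = ⨆ q : range ((↑) : ℚ → ℝ), f (projIcc a b hab q) := by
  have hcont : Continuous fun u => f (projIcc a b hab u) :=
    hf.comp_continuous (continuous_subtype_val.comp continuous_projIcc)
      fun u => (projIcc a b hab u).2
  rw [Rat.denseRange_cast.ciSup' hcont, ← sSup_range, range_comp', range_comp', range_projIcc,
    image_univ, Subtype.range_coe]

lemma measurable_sSup_image_Icc {Ω : Type*} {m : MeasurableSpace Ω} {Y : ℝ → Ω → ℝ}
    (hab : a ≤ b) (hY : ∀ ω, ContinuousOn (Y · ω) (Icc a b))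
    (hYm : ∀ u ∈ Icc a b, Measurable (Y u)) :
    Measurable fun ω => sSup ((Y · ω) '' Icc a b) := by
  have : Countable (range ((↑) : ℚ → ℝ)) := (countable_range _).to_subtype
  simp_rw [fun ω => (hY ω).sSup_image_Icc_eq_iSup_rat hab]
  exact Measurable.iSup fun q => hYm _ (projIcc a b hab q).2

end RunningMaximum

section GaussianIncrements

variable {Ω : Type*} {mΩ : MeasurableSpace Ω} {μ : Measure Ω} {D : Ω → ℝ} {v : ℝ}
  {B : ℝ → Ω → ℝ}

lemma integrable_exp_mul_sub_of_map_eq_gaussianReal [IsProbabilityMeasure μ]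
    (hD : μ.map D = gaussianReal 0 v.toNNReal) (k c : ℝ) :
    Integrable (fun ω => exp (k * D ω - c)) μ := by
  simp_rw [exp_sub]
  refine Integrable.div_const ?_ _
  rw [← mgf_pos_iff, mgf_gaussianReal hD]
  exact exp_pos _

lemma integral_exp_mul_sub_of_map_eq_gaussianReal (hv : 0 ≤ v)
    (hD : μ.map D = gaussianReal 0 v.toNNReal) (k : ℝ) :
    ∫ ω, exp (k * D ω - k ^ 2 * v / 2) ∂μ = 1 := by
  simp_rw [exp_sub]
  rw [integral_div, ← mgf, mgf_gaussianReal hD, coe_toNNReal _ hv, zero_mul, zero_add,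
    mul_comm v, div_self (exp_pos _).ne']

lemma IsStandardBM.integrable_exp_increment [IsProbabilityMeasure μ] (hB : IsStandardBM μ B)
    {s t : ℝ} (hs : 0 ≤ s) (hst : s ≤ t) (k c : ℝ) :
    Integrable (fun ω => exp (k * (B t ω - B s ω) - c)) μ :=
  integrable_exp_mul_sub_of_map_eq_gaussianReal (hB.2.2.2.1 s t hs hst) k c

lemma IsStandardBM.integral_exp_increment (hB : IsStandardBM μ B) {s t : ℝ} (hs : 0 ≤ s)
    (hst : s ≤ t) (k : ℝ) : ∫ ω, exp (k * (B t ω - B s ω) - k ^ 2 * (t - s) / 2) ∂μ = 1 :=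
  integral_exp_mul_sub_of_map_eq_gaussianReal (sub_nonneg.2 hst) (hB.2.2.2.1 s t hs hst) k

end GaussianIncrements

lemma condExp_le_mul_integral_of_le_mul_of_indep {Ω : Type*} {m m' mΩ : MeasurableSpace Ω}
    {μ : Measure Ω} [IsFiniteMeasure μ] (hm : m ≤ mΩ) (hm' : m' ≤ mΩ) {f g h : Ω → ℝ} {C : ℝ}
    (hf : StronglyMeasurable[m] f) (hfC : ∀ ω, ‖f ω‖ ≤ C) (hg : StronglyMeasurable[m'] g)
    (hgi : Integrable g μ) (hind : Indep m' m μ) (hh : Integrable h μ)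
    (hhfg : ∀ ω, h ω ≤ f ω * g ω) :
    μ[h|m] ≤ᵐ[μ] fun ω => f ω * ∫ ω, g ω ∂μ := by
  have hfg : Integrable (f * g) μ := hgi.bdd_mul (hf.mono hm).aestronglyMeasurable (ae_of_all _ hfC)
  filter_upwards [condExp_mono hh hfg (ae_of_all _ hhfg),
    condExp_mul_of_stronglyMeasurable_left hf hfg hgi, condExp_indep_eq hm' hm hg hind]
    with ω h_mono h_pull h_indep
  rwa [h_pull, Pi.mul_apply, h_indep] at h_mono

lemma rpow_div_le_rpow_div_mul_rpow_div {s s' x y α : ℝ} (hα : α ≤ 0) (hs : 0 < s)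
    (hss' : s ≤ s') (hx : 0 < x) (hy : 0 < y) :
    (s' / y) ^ α ≤ (s / x) ^ α * (x / y) ^ α := by
  rw [← mul_rpow (by positivity) (by positivity), div_mul_div_cancel₀ hx.ne']
  exact rpow_le_rpow_of_nonpos (by positivity) (by gcongr) hα

lemma rpow_div_eq_exp_increment {Ω : Type*} {B X : ℝ → Ω → ℝ} {x σ α : ℝ} (hx : x ≠ 0)
    (hX : ∀ t ω, X t ω = x * exp (α * σ ^ 2 / 2 * t + σ * B t ω)) (s t : ℝ) (ω : Ω) :
    (X s ω / X t ω) ^ α = exp (-(α * σ) * (B t ω - B s ω) - (-(α * σ)) ^ 2 * (t - s) / 2) := by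
  rw [hX, hX, mul_div_mul_left _ _ hx, ← exp_sub, ← exp_mul]
  congr 1
  ring

lemma supermartingale_of_le_mul_exp_increment {Ω : Type*} {mΩ : MeasurableSpace Ω}
    {μ : Measure Ω} [IsProbabilityMeasure μ] {B : ℝ → Ω → ℝ} (hB : IsStandardBM μ B)
    {ℱ : Filtration ℝ≥0 mΩ}
    (hindep : ∀ s t : ℝ≥0, s ≤ t →
      Indep (MeasurableSpace.comap (fun ω => B t ω - B s ω) inferInstance) (ℱ s) μ)
    {Z : ℝ≥0 → Ω → ℝ} (hZ : StronglyAdapted ℱ Z) {C : ℝ} (hZC : ∀ t ω, ‖Z t ω‖ ≤ C) (k : ℝ)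
    (hdom : ∀ s t : ℝ≥0, s ≤ t → ∀ ω,
      Z t ω ≤ Z s ω * exp (k * (B t ω - B s ω) - k ^ 2 * (t - s) / 2)) :
    Supermartingale Z ℱ μ := by
  have hZint : ∀ t, Integrable (Z t) μ := fun t =>
    .of_bound ((hZ t).mono (ℱ.le t)).aestronglyMeasurable C (ae_of_all _ (hZC t))
  refine ⟨hZ, fun s t hst => ?_, hZint⟩
  have hst' : (s : ℝ) ≤ t := hst
  have hD : Measurable fun ω => B t ω - B s ω := (hB.2.2.1 t).sub (hB.2.2.1 s)
  have hexp : Measurable[MeasurableSpace.comap (fun ω => B t ω - B s ω) inferInstance]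
      fun ω => exp (k * (B t ω - B s ω) - k ^ 2 * (t - s) / 2) :=
    measurable_exp.comp (((Measurable.of_comap_le le_rfl).const_mul _).sub_const _)
  simpa only [hB.integral_exp_increment s.coe_nonneg hst', mul_one] using
    condExp_le_mul_integral_of_le_mul_of_indep (ℱ.le s) hD.comap_le (hZ s) (hZC s)
      hexp.stronglyMeasurable (hB.integrable_exp_increment s.coe_nonneg hst' _ _) (hindep s t hst)
      (hZint t) (hdom s t hst)

theorem azema_supermartingale_general {Ω : Type*} {mΩ : MeasurableSpace Ω} (μ : Measure Ω)
    [IsProbabilityMeasure μ] (B : ℝ → Ω → ℝ) (hB : IsStandardBM μ B)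
    (r δ σ x α : ℝ) (hσ : 0 < σ) (hx : 0 < x)
    (hα : α = 2 * (r - δ) / σ ^ 2 - 1) (hαneg : α < 0)
    (X : ℝ → Ω → ℝ)
    (hX : ∀ t ω, X t ω = x * Real.exp ((r - δ - σ ^ 2 / 2) * t + σ * B t ω))
    (S : NNReal → Ω → ℝ)
    (hS : ∀ t ω, S t ω = sSup ((fun u => X u ω) '' Set.Icc (0 : ℝ) (t : ℝ)))
    (Z : NNReal → Ω → ℝ)
    (hZ : ∀ t ω, Z t ω = (S t ω / X (t : ℝ) ω) ^ α)
    (ℱ : Filtration NNReal mΩ)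
    (hadapted : Adapted ℱ fun t : NNReal => B (t : ℝ))
    (hindep : ∀ s t : NNReal, s ≤ t →
      Indep (MeasurableSpace.comap (fun ω => B (t : ℝ) ω - B (s : ℝ) ω) inferInstance)
        (ℱ s) μ) :
    (∀ (t : NNReal) (ω : Ω), 0 < Z t ω ∧ Z t ω ≤ 1) ∧
      (∀ (t : NNReal) (ω : Ω), Z t ω = 1 ↔ X (t : ℝ) ω = S t ω) ∧
      Supermartingale Z ℱ μ := by
  rw [show r - δ - σ ^ 2 / 2 = α * σ ^ 2 / 2 by rw [hα]; field_simp] at hX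
  have hXpos : ∀ u ω, 0 < X u ω := fun u ω => by rw [hX]; positivity
  have hXcont : ∀ ω, Continuous (X · ω) := fun ω => by
    simp_rw [hX]; have := hB.2.1 ω; fun_prop
  have hXS : ∀ (t : ℝ≥0) ω, X t ω ≤ S t ω := fun t ω =>
    hS t ω ▸ (hXcont ω).continuousOn.le_sSup_image_Icc ⟨t.2, le_rfl⟩
  have hSX : ∀ t ω, 1 ≤ S t ω / X t ω := fun t ω => (one_le_div (hXpos _ _)).2 (hXS t ω)
  have hZbounds : ∀ t ω, 0 < Z t ω ∧ Z t ω ≤ 1 := fun t ω => by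
    rw [hZ]
    exact ⟨rpow_pos_of_pos (zero_lt_one.trans_le (hSX t ω)) α,
      rpow_le_one_of_one_le_of_nonpos (hSX t ω) hαneg.le⟩
  have hXadapted : ∀ (t : ℝ≥0), ∀ u ∈ Icc (0 : ℝ) t, Measurable[ℱ t] (X u) := by
    rintro t u ⟨hu, hut⟩
    lift u to ℝ≥0 using hu
    rw [funext (hX u)]
    exact measurable_const.mul (measurable_exp.comp (measurable_const.add
      (((hadapted u).mono (ℱ.mono hut) le_rfl).const_mul σ)))
  have hZadapted : StronglyAdapted ℱ Z := fun t => by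
    have hSt : Measurable[ℱ t] (S t) := funext (hS t) ▸
      measurable_sSup_image_Icc t.2 (fun ω => (hXcont ω).continuousOn) (hXadapted t)
    rw [funext (hZ t)]
    exact ((hSt.div (hXadapted t t ⟨t.2, le_rfl⟩)).pow_const α).stronglyMeasurable
  refine ⟨hZbounds, fun t ω => ?_, supermartingale_of_le_mul_exp_increment hB hindep hZadapted
    (fun t ω => (norm_of_nonneg (hZbounds t ω).1.le).trans_le (hZbounds t ω).2) (-(α * σ))
    fun s t hst ω => ?_⟩
  · rw [hZ, ← one_rpow α, rpow_left_inj (zero_le_one.trans (hSX t ω)) zero_le_one hαneg.ne,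
      div_eq_one_iff_eq (hXpos _ _).ne', eq_comm]
  · have hSmono : S s ω ≤ S t ω := by
      rw [hS, hS]; exact (hXcont ω).continuousOn.sSup_image_Icc_mono s.2 hst
    rw [hZ, hZ, ← rpow_div_eq_exp_increment hx.ne' hX]
    exact rpow_div_le_rpow_div_mul_rpow_div hαneg.le ((hXpos _ _).trans_le (hXS s ω)) hSmono
      (hXpos _ _) (hXpos _ _)

/-- for `α < 0` the Azéma-type process `Z_t = (S_t/X_t)^α` (with `X` geometric
Brownian motion started at `x` and `S` its running maximum started at `s = x`) satisfies
`0 < Z_t ≤ 1`, `Z_t = 1` exactly when `X_t = S_t`, and `Z` is a supermartingale with respect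
to any filtration `ℱ` to which the driving Brownian motion `B` is adapted and with respect to
which `B` has independent future increments (here encoded by adaptedness of `B` to `ℱ`);
the drift term `α dS_t/S_t` coming from Itô's formula is nonpositive. -/
theorem azema_supermartingale {Ω : Type*} {mΩ : MeasurableSpace Ω} (μ : Measure Ω)
    [IsProbabilityMeasure μ] (B : ℝ → Ω → ℝ) (hB : IsStandardBM μ B)
    (r δ σ x α : ℝ) (hr : 0 < r) (hδ : 0 < δ) (hσ : 0 < σ) (hx : 0 < x)
    (hα : α = 2 * (r - δ) / σ ^ 2 - 1) (hαneg : α < 0)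
    (X : ℝ → Ω → ℝ)
    (hX : ∀ t ω, X t ω = x * Real.exp ((r - δ - σ ^ 2 / 2) * t + σ * B t ω))
    (S : NNReal → Ω → ℝ)
    (hS : ∀ t ω, S t ω = sSup ((fun u => X u ω) '' Set.Icc (0 : ℝ) (t : ℝ)))
    (Z : NNReal → Ω → ℝ)
    (hZ : ∀ t ω, Z t ω = (S t ω / X (t : ℝ) ω) ^ α)
    (ℱ : Filtration NNReal mΩ)
    (hadapted : Adapted ℱ fun t : NNReal => B (t : ℝ))
    (hindep : ∀ s t : NNReal, s ≤ t →
      Indep (MeasurableSpace.comap (fun ω => B (t : ℝ) ω - B (s : ℝ) ω) inferInstance)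
        (ℱ s) μ) :
    (∀ (t : NNReal) (ω : Ω), 0 < Z t ω ∧ Z t ω ≤ 1) ∧
      (∀ (t : NNReal) (ω : Ω), Z t ω = 1 ↔ X (t : ℝ) ω = S t ω) ∧
      Supermartingale Z ℱ μ :=
  azema_supermartingale_general μ B hB r δ σ x α hσ hx hα hαneg X hX S hS Z hZ ℱ hadapted hindep
end
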